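/- Let L be a nonzero Gaussian integer and s a Gaussian integer with 4·N(s) < N(L). Then for any Gaussian integers x and r such that x ≡ s (mod L), r ∈ 𝓕̄(L), and x ≡ r (mod L), one has r = s. (In particular the correctly recovered secret by an authorized coalition, computed as any fundamental-domain remainder of a solution of the congruence system modulo any associate of lcm(A), equals s.) -/

import Mathlib

/-- The closed fundamental domain `𝓕̄(z)` of a Gaussian integer `z`:
the closed square `{ z(α + βi) : -1/2 ≤ α ≤ 1/2, -1/2 ≤ β ≤ 1/2 }` in `ℂ`. -/
def FdC (z : GaussianInt) : Set ℂ :=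
  { w | ∃ α β : ℝ, w = (GaussianInt.toComplex z) * (α + β * Complex.I) ∧
      -(1/2 : ℝ) ≤ α ∧ α ≤ 1/2 ∧ -(1/2 : ℝ) ≤ β ∧ β ≤ 1/2 }

/-!
Two remainders of the same class modulo `L` differ by `L k`. If `r = L w` with `w` in the
closed unit square centred at `0` and `k ≠ 0`, then some coordinate of `k` is an integer of
absolute value at least `1`, so `|w - k| ≥ 1/2` and `N(r - L k) = N(L) |w - k|² ≥ N(L) / 4`.
Hence `s`, having `4 N(s) < N(L)`, is the only element of its class that can lie in `𝓕̄(L)`.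
-/

open Complex

lemma one_le_four_mul_sq_sub_intCast {α : ℝ} (hα : |α| ≤ 1 / 2) {n : ℤ} (hn : n ≠ 0) :
    1 ≤ 4 * (α - n) ^ 2 := by
  have hn1 : (1 : ℝ) ≤ |(n : ℝ)| := by exact_mod_cast Int.one_le_abs hn
  have hdist : 1 / 2 ≤ |α - n| := by
    rw [abs_sub_comm]
    linarith [abs_sub_abs_le_abs_sub (n : ℝ) α]
  nlinarith [sq_abs (α - n)]

lemma one_le_four_mul_normSq_sub {α β : ℝ} (hα : |α| ≤ 1 / 2) (hβ : |β| ≤ 1 / 2)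
    {k : GaussianInt} (hk : k ≠ 0) :
    1 ≤ 4 * normSq (α + β * I - GaussianInt.toComplex k) := by
  have hnormSq : normSq (α + β * I - GaussianInt.toComplex k) =
      (α - k.re) ^ 2 + (β - k.im) ^ 2 := by
    rw [GaussianInt.toComplex_def₂, normSq_apply]
    simp only [sub_re, add_re, ofReal_re, mul_re, I_re, I_im, ofReal_im, sub_im, add_im, mul_im]
    ring
  rw [hnormSq]
  have hk' : k.re ≠ 0 ∨ k.im ≠ 0 := by
    by_contra! h
    exact hk (Zsqrtd.ext h.1 h.2)
  rcases hk' with hre | him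
  · nlinarith [one_le_four_mul_sq_sub_intCast hα hre, sq_nonneg (β - k.im)]
  · nlinarith [one_le_four_mul_sq_sub_intCast hβ him, sq_nonneg (α - k.re)]

lemma norm_le_four_mul_norm_sub_mul {L r : GaussianInt} (hr : GaussianInt.toComplex r ∈ FdC L)
    {k : GaussianInt} (hk : k ≠ 0) : L.norm ≤ 4 * (r - L * k).norm := by
  obtain ⟨α, β, hrw, hα₁, hα₂, hβ₁, hβ₂⟩ := hr
  have hnorm : ((r - L * k).norm : ℝ) =
      L.norm * normSq (α + β * I - GaussianInt.toComplex k) := by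
    simp only [GaussianInt.intCast_real_norm, map_sub, map_mul, hrw, ← mul_sub]
  have hsq := one_le_four_mul_normSq_sub (abs_le.mpr ⟨hα₁, hα₂⟩) (abs_le.mpr ⟨hβ₁, hβ₂⟩) hk
  have hL : (0 : ℝ) ≤ L.norm := by exact_mod_cast GaussianInt.norm_nonneg L
  have : (L.norm : ℝ) ≤ 4 * (r - L * k).norm := by
    rw [hnorm]
    nlinarith
  exact_mod_cast this

theorem secret_recovered_general (L s : GaussianInt)
    (hs : 4 * s.norm < L.norm) :
    ∀ x r : GaussianInt, L ∣ x - s → GaussianInt.toComplex r ∈ FdC L → L ∣ x - r →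
      r = s := by
  intro x r hxs hr hxr
  obtain ⟨k, hk⟩ : L ∣ r - s := by
    simpa using dvd_sub hxs hxr
  by_cases hk0 : k = 0
  · simpa [hk0, sub_eq_zero] using hk
  · have hs' : s = r - L * k := by rw [← hk]; ring
    have hLs : L.norm ≤ 4 * s.norm := hs' ▸ norm_le_four_mul_norm_sub_mul hr hk0
    exact absurd hs (not_lt.mpr hLs)

/-- If `4 * N(s) < N(L)`, then any fundamental-domain remainder `r ∈ 𝓕̄(L)` of any
solution `x` of `x ≡ s (mod L)` equals `s`: an authorized coalition recovers the
secret. -/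
theorem secret_recovered (L s : GaussianInt) (hL : L ≠ 0)
    (hs : 4 * s.norm < L.norm) :
    ∀ x r : GaussianInt, L ∣ x - s → GaussianInt.toComplex r ∈ FdC L → L ∣ x - r →
      r = s :=
  secret_recovered_general L s hs
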